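/- arXiv:2510.26939 — 6 statements merged into one kernel-verified Lean document; each statement's English description precedes it below -/
import Mathlib

section
/- For every positive integer n, the largest natural number s such that s² divides n is equal to the number of residue classes a in ℤ/nℤ satisfying a² = 0 in ℤ/nℤ. -/
/-!
Write `s = chi n` and `m = n / s`. Square divisors of `n` are closed under `lcm`, so every `u` with
`u ^ 2 ∣ n` divides `s`. If `n ∣ k ^ 2` then `u = n / gcd n k` satisfies `u ^ 2 ∣ n` and
`n ∣ u * k`, hence `n ∣ s * k`, i.e. `m ∣ k`; conversely `n ∣ m ^ 2`. So the solutions of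
`a ^ 2 = 0` in `ZMod n` are exactly the additive subgroup generated by `m`, which has order
`n / m = s`.
-/

/-- `chi n` is the largest natural number `s` such that `s ^ 2` divides `n`
(for `n ≥ 1`, since any such `s` satisfies `s ≤ n`). -/
def chi (n : ℕ) : ℕ := Nat.findGreatest (fun s => s ^ 2 ∣ n) n

lemma chi_pos {n : ℕ} (hn : 0 < n) : 0 < chi n :=
  Nat.le_findGreatest (P := fun s => s ^ 2 ∣ n) hn (by simp)

lemma sq_chi_dvd {n : ℕ} (hn : 0 < n) : chi n ^ 2 ∣ n :=
  Nat.findGreatest_spec (P := fun s => s ^ 2 ∣ n) hn (by simp)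

lemma chi_dvd {n : ℕ} (hn : 0 < n) : chi n ∣ n :=
  (dvd_pow_self _ two_ne_zero).trans (sq_chi_dvd hn)

lemma dvd_chi_of_sq_dvd {n u : ℕ} (hn : 0 < n) (hu : u ^ 2 ∣ n) : u ∣ chi n := by
  set s := chi n
  have hl : Nat.lcm u s ^ 2 ∣ n := by
    rw [← Nat.pow_lcm_pow]
    exact Nat.lcm_dvd hu (sq_chi_dvd hn)
  have hl_pos : 0 < Nat.lcm u s := by
    refine Nat.pos_of_ne_zero fun h => ?_
    rw [h, zero_pow two_ne_zero, zero_dvd_iff] at hl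
    omega
  have hl_le_n : Nat.lcm u s ≤ n :=
    (Nat.le_self_pow two_ne_zero _).trans (Nat.le_of_dvd hn hl)
  have hl_le : Nat.lcm u s ≤ s := Nat.le_findGreatest (P := fun s => s ^ 2 ∣ n) hl_le_n hl
  have hl_eq : Nat.lcm u s = s :=
    le_antisymm hl_le (Nat.le_of_dvd hl_pos (Nat.dvd_lcm_right u s))
  exact hl_eq ▸ Nat.dvd_lcm_left u s

lemma Nat.sq_div_gcd_dvd_of_dvd_sq {n k : ℕ} (hk : n ∣ k ^ 2) : (n / n.gcd k) ^ 2 ∣ n := by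
  rcases n.eq_zero_or_pos with rfl | hn
  · simp
  set g := n.gcd k
  have hg : 0 < g := Nat.gcd_pos_of_pos_left k hn
  obtain ⟨u, hu⟩ : g ∣ n := Nat.gcd_dvd_left n k
  obtain ⟨v, hv⟩ : g ∣ k := Nat.gcd_dvd_right n k
  have hn_div : n / g = u := by rw [hu, Nat.mul_div_cancel_left _ hg]
  have hk_div : k / g = v := by rw [hv, Nat.mul_div_cancel_left _ hg]
  have hcop : u.Coprime v := hn_div ▸ hk_div ▸ Nat.coprime_div_gcd_div_gcd hg
  have hug : u ∣ g := by
    refine (hcop.pow_right 2).dvd_of_dvd_mul_right ?_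
    have : g * u ∣ g * (g * v ^ 2) := by
      rw [← hu]; convert hk using 1; rw [hv]; ring
    exact Nat.dvd_of_mul_dvd_mul_left hg this
  rw [hn_div, hu, sq]
  exact Nat.mul_dvd_mul_right hug u

lemma div_chi_dvd_of_dvd_sq {n k : ℕ} (hn : 0 < n) (hk : n ∣ k ^ 2) : n / chi n ∣ k := by
  have hu : n / n.gcd k ∣ chi n := dvd_chi_of_sq_dvd hn (Nat.sq_div_gcd_dvd_of_dvd_sq hk)
  have hnk : n ∣ chi n * k :=
    calc n = n / n.gcd k * n.gcd k := (Nat.div_mul_cancel (Nat.gcd_dvd_left n k)).symm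
      _ ∣ chi n * k := Nat.mul_dvd_mul hu (Nat.gcd_dvd_right n k)
  refine Nat.dvd_of_mul_dvd_mul_left (chi_pos hn) ?_
  rwa [Nat.mul_div_cancel' (chi_dvd hn)]

lemma dvd_sq_div_chi {n : ℕ} (hn : 0 < n) : n ∣ (n / chi n) ^ 2 := by
  obtain ⟨c, hc⟩ := sq_chi_dvd hn
  have hm : n / chi n = chi n * c := Nat.div_eq_of_eq_mul_right (chi_pos hn) (hc.trans (by ring))
  rw [hm, show (chi n * c) ^ 2 = chi n ^ 2 * c * c by ring, ← hc]
  exact dvd_mul_right n c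

lemma ZMod.sq_eq_zero_iff_mem_zmultiples {n m : ℕ} [NeZero n] (hm : n ∣ m ^ 2)
    (h : ∀ k : ℕ, n ∣ k ^ 2 → m ∣ k) (a : ZMod n) :
    a ^ 2 = 0 ↔ a ∈ AddSubgroup.zmultiples (m : ZMod n) := by
  rw [AddSubgroup.mem_zmultiples_iff]
  constructor
  · intro ha
    have hval : n ∣ a.val ^ 2 := by
      rw [← ZMod.natCast_eq_zero_iff]; push_cast; rwa [ZMod.natCast_zmod_val]
    obtain ⟨j, hj⟩ := h _ hval
    refine ⟨j, ?_⟩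
    rw [← ZMod.natCast_zmod_val a, hj, natCast_zsmul, nsmul_eq_mul, Nat.cast_mul, mul_comm]
  · rintro ⟨j, rfl⟩
    have hm0 : (m : ZMod n) ^ 2 = 0 := by exact_mod_cast (ZMod.natCast_eq_zero_iff _ n).2 hm
    rw [zsmul_eq_mul, mul_pow, hm0, mul_zero]

theorem stmt_0 (n : ℕ) (hn : 0 < n) :
    chi n = Nat.card {a : ZMod n | a ^ 2 = 0} := by
  have : NeZero n := ⟨hn.ne'⟩
  set m := n / chi n
  have hm_dvd : m ∣ n := Nat.div_dvd_of_dvd (chi_dvd hn)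
  have hset : {a : ZMod n | a ^ 2 = 0} = AddSubgroup.zmultiples (m : ZMod n) := by
    ext a
    exact ZMod.sq_eq_zero_iff_mem_zmultiples (dvd_sq_div_chi hn)
      (fun k => div_chi_dvd_of_dvd_sq hn) a
  rw [hset, SetLike.coe_sort_coe, Nat.card_zmultiples, ZMod.addOrderOf_coe _ hn.ne',
    Nat.gcd_eq_right hm_dvd, Nat.div_div_self (chi_dvd hn) hn.ne']
end

section
/- For every positive integer n, 2^(ω(n)+1) is equal to the number of pairs (x, y) of natural numbers with 0 ≤ x ≤ 4n−1, 0 ≤ y ≤ 4n−1 and x² = 4n·y + 1. -/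
/-!
Reduction modulo `4n` identifies the pairs `(x, y)` with the square roots of `1` in `ZMod (4n)`,
since `y = (x² - 1) / 4n` is determined by `x`. By the Chinese remainder theorem the number of
square roots of `1` modulo `N` is multiplicative in `N`. Modulo a power of an odd prime `p` they
are just `±1`, because `p` cannot divide both `x - 1` and `x + 1`. Modulo `2 ^ (j + 2)` they are
exactly the lifts of `±1` modulo `2 ^ (j + 1)`, which gives `2` solutions for `j = 0` and `4` for
`j ≥ 1`. Writing `n = 2 ^ j * m` with `m` odd, the count is `2 * 2 ^ ω(n)`.
-/

open Finset

section SqEqOne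

variable {M N : Type*} [Monoid M] [Monoid N]

theorem MulEquiv.natCard_sq_eq_one (e : M ≃* N) :
    Nat.card {x : M // x ^ 2 = 1} = Nat.card {y : N // y ^ 2 = 1} :=
  Nat.card_congr <| e.toEquiv.subtypeEquiv fun x => by simp [← map_pow]

theorem Prod.natCard_sq_eq_one :
    Nat.card {x : M × N // x ^ 2 = 1} =
      Nat.card {x : M // x ^ 2 = 1} * Nat.card {y : N // y ^ 2 = 1} := by
  rw [← Nat.card_prod]
  exact Nat.card_congr <|
    (Equiv.subtypeEquivRight fun x => by simp [Prod.ext_iff]).trans Equiv.subtypeProdEquivProd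

end SqEqOne

theorem AddMonoidHom.card_filter_mem_mul_card {G H : Type*} [AddGroup G] [Fintype G] [AddGroup H]
    [Fintype H] [DecidableEq H] (f : G →+ H) (hf : Function.Surjective f) (s : Finset H) :
    #{x | f x ∈ s} * Fintype.card H = #s * Fintype.card G := by
  have hfiber (t : Finset H) : #{x | f x ∈ t} = #t * #{x | f x = 0} := by
    rw [← sum_card_fiberwise_eq_card_filter, sum_const_nat fun y _ =>
      card_fiber_eq_of_mem_range f (hf y) (hf 0)]
  have hcard : Fintype.card G = Fintype.card H * #{x | f x = 0} := by
    simpa using hfiber univ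
  rw [hfiber, hcard]
  ring

theorem Int.pow_dvd_sub_one_or_pow_dvd_add_one {p : ℕ} (hp : p.Prime) (hp2 : p ≠ 2) {k : ℕ}
    {x : ℤ} (h : (p : ℤ) ^ k ∣ (x - 1) * (x + 1)) : (p : ℤ) ^ k ∣ x - 1 ∨ (p : ℤ) ^ k ∣ x + 1 := by
  have hpZ : Prime (p : ℤ) := Nat.prime_iff_prime_int.mp hp
  by_cases hx : (p : ℤ) ∣ x - 1
  · refine Or.inl (hpZ.pow_dvd_of_dvd_mul_right k (fun hx' => hp2 ?_) h)
    have h2 : (p : ℤ) ∣ 2 := by simpa using dvd_sub hx' hx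
    exact (Nat.prime_dvd_prime_iff_eq hp Nat.prime_two).mp (by exact_mod_cast h2)
  · exact Or.inr (hpZ.pow_dvd_of_dvd_mul_left k hx h)

theorem Int.two_pow_dvd_sub_one_or_two_pow_dvd_add_one {j : ℕ} {x : ℤ}
    (h : 2 ^ (j + 2) ∣ (x - 1) * (x + 1)) : 2 ^ (j + 1) ∣ x - 1 ∨ 2 ^ (j + 1) ∣ x + 1 := by
  have h2 : (2 : ℤ) ∣ (x - 1) * (x + 1) := (dvd_pow_self 2 (by omega)).trans h
  obtain ⟨t, ht⟩ : (2 : ℤ) ∣ x - 1 := by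
    rcases Int.prime_two.dvd_or_dvd h2 with h2 | h2 <;> omega
  have hx : x + 1 = 2 * (t + 1) := by omega
  -- `2 ^ j ∣ t * (t + 1)`, and one of the two factors is odd.
  rw [ht, hx, show (2 : ℤ) ^ (j + 2) = 2 * 2 * 2 ^ j by ring,
    show 2 * t * (2 * (t + 1)) = 2 * 2 * (t * (t + 1)) by ring,
    mul_dvd_mul_iff_left (by norm_num)] at h
  rw [ht, hx, pow_succ', mul_dvd_mul_iff_left two_ne_zero, mul_dvd_mul_iff_left two_ne_zero]
  rcases Int.even_or_odd t with ht | ht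
  · refine Or.inl (Int.prime_two.pow_dvd_of_dvd_mul_right j ?_ h)
    rw [← even_iff_two_dvd, Int.even_add_one]
    exact not_not_intro ht
  · refine Or.inr (Int.prime_two.pow_dvd_of_dvd_mul_left j ?_ h)
    rwa [← even_iff_two_dvd, Int.not_even_iff_odd]

namespace ZMod

theorem intCast_sq_eq_one_iff {m : ℕ} (x : ℤ) :
    (x : ZMod m) ^ 2 = 1 ↔ (m : ℤ) ∣ (x - 1) * (x + 1) := by
  rw [← intCast_zmod_eq_zero_iff_dvd]
  push_cast
  constructor <;> intro h <;> linear_combination h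

theorem intCast_eq_one_iff {m : ℕ} (x : ℤ) : (x : ZMod m) = 1 ↔ (m : ℤ) ∣ x - 1 := by
  rw [← Int.cast_one, eq_comm, intCast_eq_intCast_iff_dvd_sub]

theorem intCast_eq_neg_one_iff {m : ℕ} (x : ℤ) : (x : ZMod m) = -1 ↔ (m : ℤ) ∣ x + 1 := by
  rw [← Int.cast_one, ← Int.cast_neg, eq_comm, intCast_eq_intCast_iff_dvd_sub, sub_neg_eq_add]

theorem natCard_sq_eq_one_mul {a b : ℕ} (h : a.Coprime b) :
    Nat.card {x : ZMod (a * b) // x ^ 2 = 1} =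
      Nat.card {x : ZMod a // x ^ 2 = 1} * Nat.card {x : ZMod b // x ^ 2 = 1} :=
  (chineseRemainder h).toMulEquiv.natCard_sq_eq_one.trans Prod.natCard_sq_eq_one

theorem sq_eq_one_iff_of_prime_pow {p k : ℕ} (hp : p.Prime) (hp2 : p ≠ 2) (x : ZMod (p ^ k)) :
    x ^ 2 = 1 ↔ x = 1 ∨ x = -1 := by
  refine ⟨fun h => ?_, by rintro (rfl | rfl) <;> simp⟩
  obtain ⟨x, rfl⟩ := intCast_surjective x
  rw [intCast_sq_eq_one_iff, Nat.cast_pow] at h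
  rw [intCast_eq_one_iff, intCast_eq_neg_one_iff, Nat.cast_pow]
  exact Int.pow_dvd_sub_one_or_pow_dvd_add_one hp hp2 h

theorem natCard_sq_eq_one_of_prime_pow {p k : ℕ} (hp : p.Prime) (hp2 : p ≠ 2) (hk : k ≠ 0) :
    Nat.card {x : ZMod (p ^ k) // x ^ 2 = 1} = 2 := by
  have : Fact (2 < p ^ k) :=
    ⟨(lt_of_le_of_ne hp.two_le (Ne.symm hp2)).trans_le (Nat.le_self_pow hk p)⟩
  rw [Nat.card_congr (Equiv.subtypeEquivRight (sq_eq_one_iff_of_prime_pow hp hp2))]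
  exact (Nat.card_coe_set_eq _).trans (Set.ncard_pair neg_one_ne_one.symm)

theorem natCard_sq_eq_one_of_odd {m : ℕ} (hm : Odd m) :
    Nat.card {x : ZMod m // x ^ 2 = 1} = 2 ^ #m.primeFactors := by
  induction m using Nat.recOnPosPrimePosCoprime with
  | zero => simp at hm
  | one => simp
  | prime_pow p k hp hk =>
    have hp2 : p ≠ 2 := by
      rintro rfl
      exact Nat.not_even_iff_odd.mpr hm ((Nat.even_pow' hk.ne').mpr even_two)
    rw [natCard_sq_eq_one_of_prime_pow hp hp2 hk.ne', Nat.primeFactors_prime_pow hk.ne' hp,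
      card_singleton, pow_one]
  | coprime a b _ _ hab iha ihb =>
    obtain ⟨ha, hb⟩ := Nat.odd_mul.mp hm
    rw [natCard_sq_eq_one_mul hab, iha ha, ihb hb, hab.primeFactors_mul,
      card_union_of_disjoint hab.disjoint_primeFactors, pow_add]

theorem sq_eq_one_iff_castHom_two_pow (j : ℕ) (x : ZMod (2 ^ (j + 2))) :
    x ^ 2 = 1 ↔ castHom (pow_dvd_pow 2 (j + 1).le_succ) (ZMod (2 ^ (j + 1))) x ∈
      ({1, -1} : Finset (ZMod (2 ^ (j + 1)))) := by
  obtain ⟨x, rfl⟩ := intCast_surjective x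
  rw [map_intCast, mem_insert, mem_singleton, intCast_sq_eq_one_iff, intCast_eq_one_iff,
    intCast_eq_neg_one_iff]
  push_cast
  refine ⟨Int.two_pow_dvd_sub_one_or_two_pow_dvd_add_one, ?_⟩
  rintro (⟨u, hu⟩ | ⟨u, hu⟩)
  · exact ⟨u * (2 ^ j * u + 1), by rw [show x + 1 = x - 1 + 2 by ring, hu]; ring⟩
  · exact ⟨u * (2 ^ j * u - 1), by rw [show x - 1 = x + 1 - 2 by ring, hu]; ring⟩

theorem natCard_sq_eq_one_two_pow_add_two (j : ℕ) :
    Nat.card {x : ZMod (2 ^ (j + 2)) // x ^ 2 = 1} = 2 * 2 ^ #(2 ^ j).primeFactors := by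
  have hdvd : 2 ^ (j + 1) ∣ 2 ^ (j + 2) := pow_dvd_pow 2 (j + 1).le_succ
  have hcount : #{x : ZMod (2 ^ (j + 2)) | x ^ 2 = 1} * 2 ^ (j + 1) =
      #({1, -1} : Finset (ZMod (2 ^ (j + 1)))) * 2 ^ (j + 2) := by
    simp_rw [sq_eq_one_iff_castHom_two_pow]
    simpa only [ZMod.card, RingHom.toAddMonoidHom_eq_coe, AddMonoidHom.coe_coe] using
      AddMonoidHom.card_filter_mem_mul_card (castHom hdvd (ZMod (2 ^ (j + 1)))).toAddMonoidHom (castHom_surjective hdvd) {1, -1}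
  rw [Nat.card_eq_fintype_card, Fintype.card_subtype,
    Nat.eq_of_mul_eq_mul_right (by positivity) (hcount.trans
      (by ring : _ = 2 * #({1, -1} : Finset (ZMod (2 ^ (j + 1)))) * 2 ^ (j + 1))),
    mul_right_inj' two_ne_zero]
  rcases j with _ | j
  · rw [pow_zero, Nat.primeFactors_one]
    rfl
  · have : Fact (2 < 2 ^ (j + 1 + 1)) := ⟨by
      calc 2 < 2 ^ 2 := by norm_num
      _ ≤ 2 ^ (j + 1 + 1) := Nat.pow_le_pow_right two_pos (by omega)⟩
    rw [card_pair neg_one_ne_one.symm, Nat.primeFactors_prime_pow j.succ_ne_zero Nat.prime_two,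
      card_singleton, pow_one]

end ZMod

theorem card_filter_sq_eq_mul_add_one {N : ℕ} (hN : 1 < N) :
    #{p ∈ range N ×ˢ range N | p.1 ^ 2 = N * p.2 + 1} = Nat.card {a : ZMod N // a ^ 2 = 1} := by
  have : NeZero N := ⟨by omega⟩
  rw [Nat.card_eq_fintype_card, Fintype.card_subtype]
  refine card_nbij' (fun p => (p.1 : ZMod N)) (fun a => (a.val, a.val ^ 2 / N)) ?_ ?_ ?_ ?_
  · intro p hp
    simp only [coe_filter, mem_product, mem_range, Set.mem_ofPred_eq, mem_univ, true_and] at hp ⊢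
    simpa using congrArg (Nat.cast : ℕ → ZMod N) hp.2
  · intro a ha
    simp only [coe_filter, mem_product, mem_range, Set.mem_ofPred_eq, mem_univ, true_and] at ha ⊢
    have hlt : a.val < N := ZMod.val_lt a
    have hmod : a.val ^ 2 % N = 1 := by
      rw [← Nat.mod_eq_of_lt hN, ← ZMod.natCast_eq_natCast_iff']
      push_cast
      rwa [ZMod.natCast_zmod_val]
    refine ⟨⟨hlt, Nat.div_lt_of_lt_mul (by nlinarith)⟩, ?_⟩
    have := Nat.div_add_mod (a.val ^ 2) N
    omega
  · intro p hp
    simp only [coe_filter, mem_product, mem_range, Set.mem_ofPred_eq] at hp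
    dsimp only
    rw [ZMod.val_cast_of_lt hp.1.1, hp.2, Nat.mul_add_div (by omega), Nat.div_eq_of_lt hN,
      add_zero]
  · intro a _
    exact ZMod.natCast_zmod_val a

theorem stmt_5 (n : ℕ) (hn : 0 < n) :
    2 ^ (n.primeFactors.card + 1) =
      ((Finset.range (4 * n) ×ˢ Finset.range (4 * n)).filter
        fun p => p.1 ^ 2 = 4 * n * p.2 + 1).card := by
  obtain ⟨j, m, hm, rfl⟩ := Nat.exists_eq_two_pow_mul_odd hn.ne'
  have hcop : (2 ^ j).Coprime m := (Nat.coprime_two_left.mpr hm).pow_left j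
  rw [card_filter_sq_eq_mul_add_one (by omega), show 4 * (2 ^ j * m) = 2 ^ (j + 2) * m by ring,
    ZMod.natCard_sq_eq_one_mul ((Nat.coprime_two_left.mpr hm).pow_left _),
    ZMod.natCard_sq_eq_one_two_pow_add_two, ZMod.natCard_sq_eq_one_of_odd hm, hcop.primeFactors_mul,
    card_union_of_disjoint hcop.disjoint_primeFactors]
  ring
end

section
/- For all integers m ≥ 1 and x ≥ 1, one has x^m equal to the remainder of 2^(3·m²·x) upon division by 2^(3·m·x) − x; that is, x^m = 2^(3m²x) mod (2^(3mx) − x). -/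
/-!
Put `N = 2 ^ (3 * m * x) - x`. Then `2 ^ (3 * m * x) ≡ x [MOD N]`, so raising to the `m`-th
power gives `2 ^ (3 * m ^ 2 * x) ≡ x ^ m [MOD N]`, and `x ^ m` is already reduced because
`x ^ m + x < 2 ^ (3 * m * x)`.
-/

theorem Nat.pow_mod_sub_eq_of_lt {a x m : ℕ} (h : x ^ m < a - x) :
    a ^ m % (a - x) = x ^ m := by
  have hxa : x ≤ a := by omega
  rw [((Nat.modEq_sub hxa).pow m : a ^ m % (a - x) = x ^ m % (a - x)), Nat.mod_eq_of_lt h]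

theorem Nat.pow_add_self_lt_two_pow {m : ℕ} (hm : 1 ≤ m) (x : ℕ) :
    x ^ m + x < 2 ^ (3 * m * x) := by
  rcases Nat.eq_zero_or_pos x with rfl | hx
  · simp [Nat.pos_iff_ne_zero.mp hm]
  have hpow : x ^ m < 2 ^ (m * x) := by
    rw [mul_comm, pow_mul]
    exact Nat.pow_lt_pow_left Nat.lt_two_pow_self (by omega)
  have hself : x < 2 ^ (m * x) :=
    Nat.lt_two_pow_self.trans_le (Nat.pow_le_pow_right two_pos (Nat.le_mul_of_pos_left x hm))
  calc x ^ m + x < 2 ^ (m * x + 1) := by rw [pow_succ]; omega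
    _ ≤ 2 ^ (3 * m * x) := Nat.pow_le_pow_right two_pos (by nlinarith)

theorem stmt_9_general (m x : ℕ) (hm : 1 ≤ m) :
    x ^ m = 2 ^ (3 * m ^ 2 * x) % (2 ^ (3 * m * x) - x) := by
  have hexp : 3 * m ^ 2 * x = 3 * m * x * m := by ring
  rw [hexp, pow_mul, Nat.pow_mod_sub_eq_of_lt]
  exact Nat.lt_sub_iff_add_lt.mpr (Nat.pow_add_self_lt_two_pow hm x)

theorem stmt_9 (m x : ℕ) (hm : 1 ≤ m) (hx : 1 ≤ x) :
    x ^ m = 2 ^ (3 * m ^ 2 * x) % (2 ^ (3 * m * x) - x) :=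
  stmt_9_general m x hm
end

section
/- Let n > 1 be a composite natural number and let D be the smallest divisor of n that is greater than 1. Then the number of 6-tuples (a, b, c, d, e, f) of natural numbers satisfying the system (a+b+2)·c = n, d·(a+b+1)! + 1 = e·n, and d + f = n is exactly D − 1. -/
/-! A solution forces `a + b + 2` to be a divisor of `n` exceeding `1`, while
`d * (a + b + 1)! ≡ -1 (mod n)` forces `(a + b + 1)!` to be prime to `n`, i.e. `a + b + 1`
to be smaller than the least prime factor `p` of `n`. Hence `a + b + 2 = p`, `c = n / p`,
and `d < n` is the unique inverse of `-(p - 1)!` modulo `n`, which also fixes `e` and `f`;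
the only freedom left is the choice of `a < p - 1`. -/

open Nat

theorem Nat.Coprime.of_dvd_mul_add_one {n d m : ℕ} (h : n ∣ d * m + 1) : n.Coprime m :=
  Coprime.coprime_dvd_left h (by simp [add_comm (d * m)])

theorem lt_minFac_of_dvd_mul_factorial_add_one {n d m : ℕ} (hn : n ≠ 1)
    (h : n ∣ d * m ! + 1) : m < n.minFac :=
  (coprime_factorial_iff hn).mp (Coprime.of_dvd_mul_add_one h)

theorem add_two_eq_minFac {n d k : ℕ} (hn : n ≠ 1) (hdvd : k + 2 ∣ n)
    (h : n ∣ d * (k + 1)! + 1) : k + 2 = n.minFac := by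
  have := minFac_le_of_dvd (by omega) hdvd
  have := lt_minFac_of_dvd_mul_factorial_add_one hn h
  omega

theorem existsUnique_lt_dvd_mul_add_one {n m : ℕ} (hn : n ≠ 0) (h : n.Coprime m) :
    ∃! d, d < n ∧ n ∣ d * m + 1 := by
  have : NeZero n := ⟨hn⟩
  have hu : IsUnit (m : ZMod n) := (ZMod.isUnit_iff_coprime m n).mpr h.symm
  have key : ∀ d : ℕ, n ∣ d * m + 1 ↔ (d : ZMod n) = -(m : ZMod n)⁻¹ := by
    intro d
    rw [← ZMod.natCast_eq_zero_iff]
    push_cast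
    constructor
    · intro hd
      calc (d : ZMod n) = (d * m + 1 - 1) * (m : ZMod n)⁻¹ := by
            rw [add_sub_cancel_right, mul_assoc, ZMod.mul_inv_of_unit _ hu, mul_one]
        _ = -(m : ZMod n)⁻¹ := by rw [hd]; ring
    · intro hd
      rw [hd, neg_mul, ZMod.inv_mul_of_unit _ hu, neg_add_cancel]
  refine ⟨(-(m : ZMod n)⁻¹).val, ⟨ZMod.val_lt _, (key _).mpr (ZMod.natCast_zmod_val _)⟩, ?_⟩
  rintro d ⟨hd, hdvd⟩
  rw [← (key d).mp hdvd, ZMod.val_cast_of_lt hd]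

def solutions (n : ℕ) : Set (ℕ × ℕ × ℕ × ℕ × ℕ × ℕ) :=
  {t | (t.1 + t.2.1 + 2) * t.2.2.1 = n ∧
    t.2.2.2.1 * Nat.factorial (t.1 + t.2.1 + 1) + 1 = t.2.2.2.2.1 * n ∧
    t.2.2.2.1 + t.2.2.2.2.2 = n}

theorem solutions_eq_image {n d₀ : ℕ} (hn : 1 < n) (hd₀ : d₀ < n)
    (hd₀dvd : n ∣ d₀ * (n.minFac - 1)! + 1)
    (hd₀unique : ∀ d, d < n ∧ n ∣ d * (n.minFac - 1)! + 1 → d = d₀) :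
    solutions n = (fun a => (a, n.minFac - 2 - a, n / n.minFac, d₀,
      (d₀ * (n.minFac - 1)! + 1) / n, n - d₀)) '' Set.Iio (n.minFac - 1) := by
  ext ⟨a, b, c, d, e, f⟩
  simp only [solutions, Set.mem_ofPred_eq, Set.mem_image, Set.mem_Iio, Prod.mk.injEq]
  constructor
  · rintro ⟨hc, he, hf⟩
    have hdvd : n ∣ d * (a + b + 1)! + 1 := Dvd.intro_left e he.symm
    have hp := add_two_eq_minFac (by omega) (Dvd.intro c hc) hdvd
    rw [show a + b + 1 = n.minFac - 1 by omega] at hdvd he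
    have hdn : d ≠ n := by
      rintro rfl
      exact absurd (Nat.dvd_one.mp ((Nat.dvd_add_right (dvd_mul_right d _)).mp hdvd)) (by omega)
    have hd : d = d₀ := hd₀unique d ⟨by omega, hdvd⟩
    refine ⟨a, by omega, rfl, by omega, ?_, hd.symm, ?_, by omega⟩
    · rw [← hp, ← hc, Nat.mul_div_cancel_left _ (by omega)]
    · rw [← hd, he, Nat.mul_div_cancel _ (by omega)]
  · rintro ⟨a, ha, rfl, rfl, rfl, rfl, rfl, rfl⟩
    have hp : a + (n.minFac - 2 - a) + 2 = n.minFac := by omega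
    refine ⟨?_, ?_, by omega⟩
    · rw [hp, Nat.mul_div_cancel' (minFac_dvd n)]
    · rw [show a + (n.minFac - 2 - a) + 1 = n.minFac - 1 by omega, Nat.div_mul_cancel hd₀dvd]

theorem card_solutions {n : ℕ} (hn : 1 < n) : Nat.card (solutions n) = n.minFac - 1 := by
  have hcop : n.Coprime (n.minFac - 1)! := (coprime_factorial_iff (by omega)).mpr (sub_lt (minFac_pos n) one_pos)
  obtain ⟨d₀, ⟨hd₀, hd₀dvd⟩, hd₀unique⟩ := existsUnique_lt_dvd_mul_add_one (by omega) hcop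
  rw [solutions_eq_image hn hd₀ hd₀dvd hd₀unique,
    Nat.card_image_of_injOn fun x _ y _ h => (Prod.mk.inj h).1]
  simp

theorem stmt_10_general (n : ℕ) (hn : 1 < n) (D : ℕ)
    (hD1 : 1 < D) (hDn : D ∣ n) (hDmin : ∀ d, 1 < d → d ∣ n → D ≤ d) :
    Nat.card {t : ℕ × ℕ × ℕ × ℕ × ℕ × ℕ |
      (t.1 + t.2.1 + 2) * t.2.2.1 = n ∧
      t.2.2.2.1 * Nat.factorial (t.1 + t.2.1 + 1) + 1 = t.2.2.2.2.1 * n ∧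
      t.2.2.2.1 + t.2.2.2.2.2 = n} = D - 1 := by
  have hD : D = n.minFac :=
    le_antisymm (hDmin _ (minFac_prime (by omega)).one_lt (minFac_dvd n))
      (minFac_le_of_dvd hD1 hDn)
  subst hD
  exact card_solutions hn

theorem stmt_10 (n : ℕ) (hn : 1 < n) (hcomp : ¬ n.Prime) (D : ℕ)
    (hD1 : 1 < D) (hDn : D ∣ n) (hDmin : ∀ d, 1 < d → d ∣ n → D ≤ d) :
    Nat.card {t : ℕ × ℕ × ℕ × ℕ × ℕ × ℕ |
      (t.1 + t.2.1 + 2) * t.2.2.1 = n ∧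
      t.2.2.2.1 * Nat.factorial (t.1 + t.2.1 + 1) + 1 = t.2.2.2.2.1 * n ∧
      t.2.2.2.1 + t.2.2.2.2.2 = n} = D - 1 :=
  stmt_10_general n hn D hD1 hDn hDmin
end

section
/- Let n be a prime number. Then the number of 6-tuples (a, b, c, d, e, f) of natural numbers satisfying the system (a+b+2)·c = n, d·(a+b+1)! + 1 = e·n, and d + f = n is exactly n − 1. -/
/-!
As `a + b + 2 ≥ 2` divides the prime `n`, we get `c = 1` and `a + b + 1 = n - 1`. By Wilson's
theorem `(n - 1)! ≡ -1 [MOD n]`, so the second equation forces `d ≡ 1 [MOD n]`, hence `d = 1`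
because `d ≤ n`. Then `e = ((n - 1)! + 1) / n` and `f = n - 1` are determined, and the solutions
are parametrised by the `n - 1` pairs `(a, b)` with `a + b = n - 2`.
-/

open Nat Finset

theorem Nat.Prime.dvd_factorial_pred_add_one {p : ℕ} (hp : p.Prime) : p ∣ (p - 1)! + 1 := by
  have := Fact.mk hp
  rw [← ZMod.natCast_eq_zero_iff]
  push_cast [ZMod.wilsons_lemma]
  ring

theorem Nat.Prime.eq_one_of_dvd_mul_factorial_pred_add_one {p d : ℕ} (hp : p.Prime) (hd : d ≤ p)
    (h : p ∣ d * (p - 1)! + 1) : d = 1 := by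
  have := Fact.mk hp
  have hd1 : (d : ZMod p) = 1 := by
    rw [← ZMod.natCast_eq_zero_iff] at h
    push_cast [ZMod.wilsons_lemma] at h
    linear_combination -h
  rcases hd.lt_or_eq with hlt | rfl
  · rw [← ZMod.val_natCast_of_lt hlt, hd1, ZMod.val_one]
  · simp at hd1

theorem Nat.Prime.factorial_system_iff {p : ℕ} (hp : p.Prime) {a b c d e f : ℕ} :
    ((a + b + 2) * c = p ∧ d * (a + b + 1)! + 1 = e * p ∧ d + f = p) ↔
      (a + b = p - 2 ∧ c = 1 ∧ d = 1 ∧ e = ((p - 1)! + 1) / p ∧ f = p - 1) := by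
  constructor
  · rintro ⟨hc, he, hf⟩
    have hc1 : c = 1 := by
      rw [← hc] at hp
      rcases Nat.prime_mul_iff.mp hp with ⟨-, h⟩ | ⟨-, h⟩
      · exact h
      · omega
    subst hc1
    rw [show a + b + 1 = p - 1 by omega] at he
    obtain rfl : d = 1 :=
      hp.eq_one_of_dvd_mul_factorial_pred_add_one (by omega) ⟨e, by rw [he, mul_comm]⟩
    refine ⟨by omega, rfl, rfl, ?_, by omega⟩
    rw [← one_mul (p - 1)!, he, Nat.mul_div_cancel _ hp.pos]
  · rintro ⟨hab, rfl, rfl, rfl, rfl⟩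
    have := hp.two_le
    refine ⟨by omega, ?_, by omega⟩
    rw [show a + b + 1 = p - 1 by omega, one_mul, Nat.div_mul_cancel hp.dvd_factorial_pred_add_one]

theorem stmt_11 (n : ℕ) (hn : n.Prime) :
    Nat.card {t : ℕ × ℕ × ℕ × ℕ × ℕ × ℕ |
      (t.1 + t.2.1 + 2) * t.2.2.1 = n ∧
      t.2.2.2.1 * Nat.factorial (t.1 + t.2.1 + 1) + 1 = t.2.2.2.2.1 * n ∧
      t.2.2.2.1 + t.2.2.2.2.2 = n} = n - 1 := by
  have hsol : {t : ℕ × ℕ × ℕ × ℕ × ℕ × ℕ |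
      (t.1 + t.2.1 + 2) * t.2.2.1 = n ∧
      t.2.2.2.1 * Nat.factorial (t.1 + t.2.1 + 1) + 1 = t.2.2.2.2.1 * n ∧
      t.2.2.2.1 + t.2.2.2.2.2 = n} =
      (fun x : ℕ × ℕ => (x.1, x.2, 1, 1, ((n - 1)! + 1) / n, n - 1)) ''
        (antidiagonal (n - 2) : Set (ℕ × ℕ)) := by
    ext ⟨a, b, c, d, e, f⟩
    simp only [Set.mem_ofPred_eq, hn.factorial_system_iff, Set.mem_image, Finset.mem_coe,
      Prod.exists, Prod.mk.injEq]
    aesop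
  have hinj : Function.Injective
      (fun x : ℕ × ℕ => (x.1, x.2, 1, 1, ((n - 1)! + 1) / n, n - 1)) :=
    fun _ _ h => by
      simp only [Prod.mk.injEq] at h
      exact Prod.ext h.1 h.2.1
  rw [hsol, Nat.card_image_of_injective hinj, Nat.card_coe_set_eq, Set.ncard_coe_finset,
    Finset.Nat.card_antidiagonal]
  have := hn.two_le
  omega
end

section
/- Let n be a composite squarefree natural number. Then q = gcd(n, ⌊n^(1/ω(n))⌋!) is a non-trivial divisor of n, i.e., q divides n and 1 < q < n. -/
/-!
Let `p` be the least and `P` the greatest prime factor of `n`, and `ω = ω(n) ≥ 2`. Since `n` is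
the product of its `ω` prime factors, `p ^ ω ≤ n < P ^ ω`, so `p ≤ ⌊n^(1/ω)⌋ < P`. Hence `p`
divides `q = gcd(n, ⌊n^(1/ω)⌋!)`, while `P` does not, so `1 < q < n`.
-/

/-- `iroot m n` is the greatest natural number `r` with `r ^ m ≤ n`
(for `m ≥ 1` and `n ≥ 1`, since any such `r` satisfies `r ≤ n`). -/
def iroot (m n : ℕ) : ℕ := Nat.findGreatest (fun r => r ^ m ≤ n) n

open Nat

lemma le_iroot_iff {m n r : ℕ} (hm : m ≠ 0) : r ≤ iroot m n ↔ r ^ m ≤ n := by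
  constructor
  · intro hr
    have hspec : iroot m n ^ m ≤ n :=
      Nat.findGreatest_spec (P := fun r => r ^ m ≤ n) (Nat.zero_le n) (by simp [hm])
    exact (Nat.pow_le_pow_left hr m).trans hspec
  · intro hr
    refine Nat.le_findGreatest ?_ hr
    rcases r.eq_zero_or_pos with rfl | hr0
    · exact Nat.zero_le n
    · exact (Nat.le_self_pow hm r).trans hr

lemma iroot_lt_iff {m n r : ℕ} (hm : m ≠ 0) : iroot m n < r ↔ n < r ^ m := by
  simpa only [not_le] using (le_iroot_iff (n := n) (r := r) hm).not

lemma Nat.one_lt_gcd_factorial {n k p : ℕ} (hp : p.Prime) (hpn : p ∣ n) (hn : n ≠ 0)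
    (hpk : p ≤ k) : 1 < n.gcd k ! :=
  hp.one_lt.trans_le <| Nat.le_of_dvd (Nat.gcd_pos_of_pos_left _ (Nat.pos_of_ne_zero hn))
    (Nat.dvd_gcd hpn (Nat.dvd_factorial hp.pos hpk))

lemma Nat.gcd_factorial_lt {n k p : ℕ} (hp : p.Prime) (hpn : p ∣ n) (hn : n ≠ 0)
    (hkp : k < p) : n.gcd k ! < n := by
  refine (Nat.le_of_dvd (Nat.pos_of_ne_zero hn) (Nat.gcd_dvd_left n k !)).lt_of_ne fun h => ?_
  have hpk : p ∣ k ! := hpn.trans (h ▸ Nat.gcd_dvd_right n k !)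
  exact (hp.dvd_factorial.mp hpk).not_gt hkp

lemma Nat.minFac_pow_card_primeFactors_le {n : ℕ} (hn : n ≠ 0) :
    n.minFac ^ n.primeFactors.card ≤ n :=
  calc n.minFac ^ n.primeFactors.card
      ≤ ∏ p ∈ n.primeFactors, p := Finset.pow_card_le_prod _ _ _ fun _ hp =>
        Nat.minFac_le_of_dvd (Nat.prime_of_mem_primeFactors hp).two_le
          (Nat.dvd_of_mem_primeFactors hp)
    _ ≤ n := Nat.le_of_dvd (Nat.pos_of_ne_zero hn) (Nat.prod_primeFactors_dvd n)

lemma Squarefree.two_le_card_primeFactors {n : ℕ} (hsf : Squarefree n) (hn : 1 < n)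
    (hcomp : ¬ n.Prime) : 2 ≤ n.primeFactors.card := by
  have hne : n.primeFactors.card ≠ 0 := by
    simpa [Finset.card_eq_zero] using Nat.nonempty_primeFactors.mpr hn |>.ne_empty
  have hne_one : n.primeFactors.card ≠ 1 := by
    rintro hcard
    obtain ⟨p, hp⟩ := Finset.card_eq_one.mp hcard
    have hnp : n = p := by simpa [hp] using (Nat.prod_primeFactors_of_squarefree hsf).symm
    exact hcomp (hnp ▸ Nat.prime_of_mem_primeFactors (hp ▸ Finset.mem_singleton_self p))
  omega

lemma Squarefree.exists_mem_primeFactors_lt_pow_card {n : ℕ} (hsf : Squarefree n)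
    (hcard : 2 ≤ n.primeFactors.card) : ∃ P ∈ n.primeFactors, n < P ^ n.primeFactors.card := by
  have hne : n.primeFactors.Nonempty := Finset.card_pos.mp (by omega)
  set P := n.primeFactors.max' hne
  refine ⟨P, n.primeFactors.max'_mem hne, ?_⟩
  calc n = ∏ q ∈ n.primeFactors, q := (Nat.prod_primeFactors_of_squarefree hsf).symm
    _ < ∏ _q ∈ n.primeFactors, P :=
      Finset.prod_lt_prod (fun q hq => (Nat.prime_of_mem_primeFactors hq).pos)
        (fun q hq => n.primeFactors.le_max' q hq)
        ⟨_, n.primeFactors.min'_mem hne, n.primeFactors.min'_lt_max'_of_card (by omega)⟩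
    _ = P ^ n.primeFactors.card := Finset.prod_const P

theorem stmt_14 (n : ℕ) (hn : 1 < n) (hcomp : ¬ n.Prime) (hsf : Squarefree n) :
    Nat.gcd n (Nat.factorial (iroot n.primeFactors.card n)) ∣ n ∧
    1 < Nat.gcd n (Nat.factorial (iroot n.primeFactors.card n)) ∧
    Nat.gcd n (Nat.factorial (iroot n.primeFactors.card n)) < n := by
  have hn0 : n ≠ 0 := by omega
  have hcard := hsf.two_le_card_primeFactors hn hcomp
  obtain ⟨P, hP, hnP⟩ := hsf.exists_mem_primeFactors_lt_pow_card hcard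
  have hcard0 : n.primeFactors.card ≠ 0 := by omega
  have hminFac_le : n.minFac ≤ iroot n.primeFactors.card n :=
    (le_iroot_iff hcard0).2 (Nat.minFac_pow_card_primeFactors_le hn0)
  have hlt_P : iroot n.primeFactors.card n < P := (iroot_lt_iff hcard0).2 hnP
  exact ⟨Nat.gcd_dvd_left _ _,
    Nat.one_lt_gcd_factorial (Nat.minFac_prime hn.ne') (Nat.minFac_dvd n) hn0 hminFac_le,
    Nat.gcd_factorial_lt (Nat.prime_of_mem_primeFactors hP) (Nat.dvd_of_mem_primeFactors hP)
      hn0 hlt_P⟩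
end
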